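/- Let ν ≥ −1/2 and γ > 0 be fixed. There exist constants 0 < c ≤ C, depending only on ν and γ, such that for all A > B ≥ 0 the integral G(A,B) = ∫_{[−1,1]} (A − Bs)^{−γ} dΠ_ν(s) satisfies: if γ > ν + 1/2, then c ≤ G(A,B) / [A^{−ν−1/2} (A−B)^{−γ+ν+1/2}] ≤ C; if γ = ν + 1/2, then c ≤ G(A,B) / [A^{−ν−1/2} (1 + log⁺(B/(A−B)))] ≤ C; if γ < ν + 1/2, then c ≤ G(A,B) / A^{−γ} ≤ C. Here log⁺ x = max(log x, 0). -/

import Mathlib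

/-!
For `ν > -1/2` write `κ = ν - 1/2`, `D = A - B` and `r = D / A ∈ (0, 1]`. Folding `[-1, 1]` onto
`[0, 1]` through `s = 1 - t` and `s = t - 1` (the second half contributes at most the first), and
using `max D (A t) ≤ D + B t ≤ 2 max D (A t)`, the integral `G(A, B)` is comparable, with constants
depending only on `ν` and `γ`, to `A^{-γ} L(r)` for the model integral
`L(r) = ∫₀¹ max(r, t)^{-γ} t^κ dt`. Splitting at `t = r` gives
`L(r) = r^{κ+1-γ} / (κ+1) + ∫_r^1 t^{κ-γ} dt`, which is of size `1`, `r^{κ+1-γ}` or `1 + log (1/r)`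
according as `γ < κ + 1`, `γ > κ + 1` or `γ = κ + 1`. For `ν = -1/2` the integral is
`((A+B)^{-γ} + (A-B)^{-γ}) / 2`, which lies between `(A-B)^{-γ} / 2` and `(A-B)^{-γ}`.
-/

open MeasureTheory Real Set
open scoped Classical

noncomputable section

def logPlus (x : ℝ) : ℝ := max (Real.log x) 0

/-- The measure `dΠ_ν` on `[−1,1]`: for `ν > −1/2` the probability measure with density
`u ↦ Γ(ν+1)/(√π Γ(ν+1/2)) (1−u²)^{ν−1/2}`, and for `ν = −1/2` half the sum of the unit
point masses at `−1` and `1`. -/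
def piMeasure (ν : ℝ) : Measure ℝ :=
  if ν = -1/2 then ((1:ENNReal)/2) • (Measure.dirac (-1) + Measure.dirac 1)
  else (volume.restrict (Set.Ioo (-1:ℝ) 1)).withDensity
    (fun u => ENNReal.ofReal
      (Real.Gamma (ν+1) / (Real.sqrt π * Real.Gamma (ν+1/2)) * (1 - u^2) ^ (ν - 1/2)))

open Filter Asymptotics

section IsTheta

variable {α : Type*} {S : Set α} {f g : α → ℝ}

theorem isTheta_principal_of_bounds {c C : ℝ} (hc : 0 < c)
    (h : ∀ x ∈ S, 0 ≤ g x ∧ c * g x ≤ f x ∧ f x ≤ C * g x) : f =Θ[𝓟 S] g := by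
  refine ⟨isBigO_principal.2 ⟨C, fun x hx => ?_⟩, isBigO_principal.2 ⟨c⁻¹, fun x hx => ?_⟩⟩ <;>
    obtain ⟨hg, hcg, hfC⟩ := h x hx <;>
    rw [norm_of_nonneg ((mul_nonneg hc.le hg).trans hcg), norm_of_nonneg hg]
  · exact hfC
  · rwa [inv_mul_eq_div, le_div_iff₀ hc, mul_comm]

theorem exists_bounds_of_isTheta_principal (h : f =Θ[𝓟 S] g) (hf : ∀ x ∈ S, 0 ≤ f x)
    (hg : ∀ x ∈ S, 0 ≤ g x) :
    ∃ c C : ℝ, 0 < c ∧ c ≤ C ∧ ∀ x ∈ S, c * g x ≤ f x ∧ f x ≤ C * g x := by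
  obtain ⟨K, hK⟩ := isBigO_principal.1 h.1
  obtain ⟨k, hk⟩ := isBigO_principal.1 h.2
  have hk1 : 0 < max k 1 := lt_max_of_lt_right one_pos
  refine ⟨(max k 1)⁻¹, max K (max k 1)⁻¹, inv_pos.2 hk1, le_max_right _ _, fun x hx => ?_⟩
  have hfK := hK x hx
  have hgk := hk x hx
  rw [norm_of_nonneg (hf x hx), norm_of_nonneg (hg x hx)] at hfK hgk
  constructor
  · rw [inv_mul_eq_div, div_le_iff₀ hk1]
    nlinarith [le_max_left k 1, hf x hx]
  · nlinarith [le_max_left K (max k 1)⁻¹, hg x hx]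

theorem isTheta_integral_of_ae_bounds {β : Type*} [MeasurableSpace β] {μ : Measure β}
    {F G : α → β → ℝ} {c C : ℝ} (hc : 0 < c) (hF : ∀ x ∈ S, Integrable (F x) μ)
    (hG : ∀ x ∈ S, Integrable (G x) μ)
    (h : ∀ x ∈ S, ∀ᵐ t ∂μ, 0 ≤ G x t ∧ c * G x t ≤ F x t ∧ F x t ≤ C * G x t) :
    (fun x => ∫ t, F x t ∂μ) =Θ[𝓟 S] fun x => ∫ t, G x t ∂μ := by
  refine isTheta_principal_of_bounds (C := C) hc fun x hx =>
    ⟨integral_nonneg_of_ae ((h x hx).mono fun t ht => ht.1), ?_, ?_⟩ <;>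
  rw [← integral_const_mul]
  · exact integral_mono_ae ((hG x hx).const_mul c) (hF x hx) ((h x hx).mono fun t ht => ht.2.1)
  · exact integral_mono_ae (hF x hx) ((hG x hx).const_mul C) ((h x hx).mono fun t ht => ht.2.2)

end IsTheta

theorem min_rpow_le_rpow {a b x : ℝ} (ha : 0 < a) (hx : x ∈ Icc a b) (κ : ℝ) :
    min (a ^ κ) (b ^ κ) ≤ x ^ κ := by
  rcases le_total 0 κ with hκ | hκ
  · exact (min_le_left _ _).trans (rpow_le_rpow ha.le hx.1 hκ)
  · exact (min_le_right _ _).trans (rpow_le_rpow_of_nonpos (ha.trans_le hx.1) hx.2 hκ)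

theorem rpow_le_max_rpow {a b x : ℝ} (ha : 0 < a) (hx : x ∈ Icc a b) (κ : ℝ) :
    x ^ κ ≤ max (a ^ κ) (b ^ κ) := by
  rcases le_total 0 κ with hκ | hκ
  · exact (rpow_le_rpow (ha.le.trans hx.1) hx.2 hκ).trans (le_max_right _ _)
  · exact (rpow_le_rpow_of_nonpos ha hx.1 hκ).trans (le_max_left _ _)

theorem intervalIntegrable_one_sub_sq_rpow {κ : ℝ} (hκ : -1 < κ) :
    IntervalIntegrable (fun s : ℝ => (1 - s ^ 2) ^ κ) volume (-1) 1 := by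
  have hright : IntervalIntegrable (fun s : ℝ => (1 - s ^ 2) ^ κ) volume 0 1 := by
    have hsing : IntervalIntegrable (fun s : ℝ => (1 - s) ^ κ) volume 0 1 := by
      simpa using
        ((intervalIntegral.intervalIntegrable_rpow' hκ (a := 0) (b := 1)).comp_sub_left 1).symm
    have hcont : ContinuousOn (fun s : ℝ => (1 + s) ^ κ) (uIcc 0 1) := by
      refine ContinuousOn.rpow_const (by fun_prop) fun s hs => Or.inl ?_
      rw [uIcc_of_le zero_le_one] at hs
      linarith [hs.1]
    refine (hsing.continuousOn_mul hcont).congr fun s hs => ?_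
    rw [uIoc_of_le zero_le_one] at hs
    rw [← mul_rpow (by linarith [hs.1]) (by linarith [hs.2])]
    ring_nf
  refine IntervalIntegrable.trans ?_ hright
  simpa using (hright.comp_sub_left 0).symm

section Symmetrization

variable {f : ℝ → ℝ}

theorem IntervalIntegrable.comp_one_sub (hf : IntervalIntegrable f volume (-1) 1) :
    IntervalIntegrable (fun t => f (1 - t)) volume 0 1 := by
  simpa using ((hf.mono_set (c := 0) (d := 1) (by simp [Icc_subset_Icc])).comp_sub_left 1).symm

theorem IntervalIntegrable.comp_sub_one (hf : IntervalIntegrable f volume (-1) 1) :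
    IntervalIntegrable (fun t => f (t - 1)) volume 0 1 := by
  simpa using (hf.mono_set (c := -1) (d := 0) (by simp [Icc_subset_Icc])).comp_sub_right 1

theorem integral_neg_one_one_eq_integral_zero_one (hf : IntervalIntegrable f volume (-1) 1) :
    ∫ s in (-1:ℝ)..1, f s = ∫ t in (0:ℝ)..1, (f (1 - t) + f (t - 1)) := by
  rw [intervalIntegral.integral_add hf.comp_one_sub hf.comp_sub_one,
    intervalIntegral.integral_comp_sub_left, intervalIntegral.integral_comp_sub_right,
    ← intervalIntegral.integral_add_adjacent_intervals (b := 0)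
      (hf.mono_set (by simp [Icc_subset_Icc])) (hf.mono_set (by simp [Icc_subset_Icc])),
    sub_self, sub_zero, zero_sub, add_comm]

end Symmetrization

def modelIntegral (κ γ r : ℝ) : ℝ := ∫ t in (0:ℝ)..1, max r t ^ (-γ) * t ^ κ

section ModelIntegral

variable {κ γ r : ℝ}

theorem intervalIntegrable_max_rpow_mul_rpow (hκ : -1 < κ) (hr : 0 < r) (c a b : ℝ) :
    IntervalIntegrable (fun t => max r (c * t) ^ (-γ) * t ^ κ) volume a b :=
  (intervalIntegral.intervalIntegrable_rpow' hκ).continuousOn_mul <|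
    ((continuous_const.max (continuous_const.mul continuous_id)).rpow_const fun _ =>
      Or.inl (lt_max_of_lt_left hr).ne').continuousOn

theorem modelIntegral_eq (hκ : -1 < κ) (hr : r ∈ Ioc 0 1) :
    modelIntegral κ γ r = r ^ (κ + 1 - γ) / (κ + 1) + ∫ t in r..1, t ^ (κ - γ) := by
  obtain ⟨hr0, hr1⟩ := hr
  have hint : ∀ a b : ℝ, IntervalIntegrable (fun t => max r t ^ (-γ) * t ^ κ) volume a b :=
    fun a b => by simpa using intervalIntegrable_max_rpow_mul_rpow (γ := γ) hκ hr0 1 a b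
  rw [modelIntegral, ← intervalIntegral.integral_add_adjacent_intervals (hint 0 r) (hint r 1)]
  congr 1
  · rw [intervalIntegral.integral_congr (g := fun t => r ^ (-γ) * t ^ κ) fun t ht => by
        rw [uIcc_of_le hr0.le] at ht
        simp only [max_eq_left ht.2],
      intervalIntegral.integral_const_mul, integral_rpow (Or.inl hκ),
      zero_rpow (by linarith), rpow_sub hr0, rpow_neg hr0.le]
    ring
  · refine intervalIntegral.integral_congr fun t ht => ?_
    rw [uIcc_of_le hr1] at ht
    simp only [max_eq_right ht.1]
    rw [← rpow_add (hr0.trans_le ht.1), neg_add_eq_sub]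

theorem modelIntegral_isTheta_one (hκ : -1 < κ) (hγκ : γ < κ + 1) :
    modelIntegral κ γ =Θ[𝓟 (Ioc 0 1)] fun _ => (1 : ℝ) := by
  set a := 1 / (κ + 1)
  set b := 1 / (κ + 1 - γ)
  have ha : 0 < a := one_div_pos.2 (by linarith)
  have hb : 0 < b := one_div_pos.2 (by linarith)
  refine isTheta_principal_of_bounds (c := min a b) (C := max a b) (lt_min ha hb) fun r hr => ?_
  have hu0 : 0 ≤ r ^ (κ + 1 - γ) := rpow_nonneg hr.1.le _
  have hu1 : r ^ (κ + 1 - γ) ≤ 1 := rpow_le_one hr.1.le hr.2 (by linarith)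
  have hL : modelIntegral κ γ r = a * r ^ (κ + 1 - γ) + b * (1 - r ^ (κ + 1 - γ)) := by
    rw [modelIntegral_eq hκ hr, integral_rpow (Or.inl (by linarith)), one_rpow,
      show κ - γ + 1 = κ + 1 - γ by ring]
    ring
  rw [hL]
  refine ⟨zero_le_one, ?_, ?_⟩
  · nlinarith [min_le_left a b, min_le_right a b]
  · nlinarith [le_max_left a b, le_max_right a b]

theorem modelIntegral_isTheta_rpow (hκ : -1 < κ) (hκγ : κ + 1 < γ) :
    modelIntegral κ γ =Θ[𝓟 (Ioc 0 1)] fun r => r ^ (κ + 1 - γ) := by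
  set a := 1 / (κ + 1)
  set b := 1 / (γ - (κ + 1))
  have ha : 0 < a := one_div_pos.2 (by linarith)
  have hb : 0 < b := one_div_pos.2 (by linarith)
  refine isTheta_principal_of_bounds (c := a) (C := a + b) ha fun r hr => ?_
  have hv : 1 ≤ r ^ (κ + 1 - γ) := one_le_rpow_of_pos_of_le_one_of_nonpos hr.1 hr.2 (by linarith)
  have hL : modelIntegral κ γ r = a * r ^ (κ + 1 - γ) + b * (r ^ (κ + 1 - γ) - 1) := by
    have h0 : (0 : ℝ) ∉ uIcc r 1 := by
      rw [uIcc_of_le hr.2]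
      exact fun h => hr.1.not_ge h.1
    rw [modelIntegral_eq hκ hr, integral_rpow (Or.inr ⟨by linarith, h0⟩), one_rpow,
      show κ - γ + 1 = -(γ - (κ + 1)) by ring, div_neg, ← neg_div,
      show κ + 1 - γ = -(γ - (κ + 1)) by ring]
    ring
  rw [hL]
  refine ⟨by linarith, by nlinarith, by nlinarith⟩

theorem logPlus_eq_posLog (x : ℝ) : logPlus x = log⁺ x := max_comm _ _

theorem modelIntegral_isTheta_one_add_logPlus (hκ : -1 < κ) :
    modelIntegral κ (κ + 1) =Θ[𝓟 (Ioc 0 1)] fun r => 1 + logPlus ((1 - r) / r) := by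
  set a := 1 / (κ + 1)
  have ha : 0 < a := one_div_pos.2 (by linarith)
  refine isTheta_principal_of_bounds (c := min a 1) (C := a + 1) (lt_min ha one_pos)
    fun r hr => ?_
  set x := (1 - r) / r
  have hx : 0 ≤ x := div_nonneg (by linarith [hr.2]) hr.1.le
  have hL : modelIntegral κ (κ + 1) r = a + log⁺ (1 + x) := by
    have hx1 : 1 + x = 1 / r := by
      have := hr.1.ne'
      simp only [x]
      field_simp
      ring
    rw [modelIntegral_eq hκ hr, show κ - (κ + 1) = -1 by ring, sub_self, rpow_zero,
      intervalIntegral.integral_congr fun t _ => rpow_neg_one t, integral_inv_of_pos hr.1 one_pos,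
      hx1, posLog_eq_log (by rw [← hx1]; exact (le_abs_self _).trans' (by linarith))]
  have hlow : log⁺ x ≤ log⁺ (1 + x) := posLog_le_posLog hx (by linarith)
  have hup : log⁺ (1 + x) ≤ 1 + log⁺ x := by
    have := posLog_add (x := 1) (y := x)
    rw [posLog_one, add_zero] at this
    linarith [log_two_lt_d9]
  rw [hL, logPlus_eq_posLog]
  have hpos : 0 ≤ log⁺ x := posLog_nonneg
  refine ⟨by linarith, ?_, by nlinarith⟩
  nlinarith [min_le_left a 1, min_le_right a 1]

theorem rpow_mul_modelIntegral {A : ℝ} (hA : 0 < A) :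
    A ^ (-γ) * modelIntegral κ γ r = ∫ t in (0:ℝ)..1, max (A * r) (A * t) ^ (-γ) * t ^ κ := by
  rw [modelIntegral, ← intervalIntegral.integral_const_mul]
  refine intervalIntegral.integral_congr fun t ht => ?_
  rw [uIcc_of_le zero_le_one] at ht
  rw [← mul_assoc, ← mul_rpow hA.le (le_max_of_le_right ht.1), mul_max_of_nonneg _ _ hA.le]

theorem intervalIntegrable_sub_mul_rpow_mul_one_sub_sq_rpow {A B : ℝ} (hκ : -1 < κ)
    (hB : 0 ≤ B) (hBA : B < A) :
    IntervalIntegrable (fun s => (A - B * s) ^ (-γ) * (1 - s ^ 2) ^ κ) volume (-1) 1 :=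
  (intervalIntegrable_one_sub_sq_rpow hκ).continuousOn_mul <|
    ContinuousOn.rpow_const (by fun_prop) fun s hs => by
      rw [uIcc_of_le (by norm_num)] at hs
      exact Or.inl (by nlinarith [hs.2])

theorem sub_mul_one_sub_rpow_bounds {A B t : ℝ} (hγ : 0 ≤ γ) (hB : 0 ≤ B) (hBA : B < A)
    (ht : t ∈ Ioc (0:ℝ) 1) :
    2 ^ (-γ) * min 1 (2 ^ κ) * (max (A - B) (A * t) ^ (-γ) * t ^ κ) ≤
        (A - B * (1 - t)) ^ (-γ) * (1 - (1 - t) ^ 2) ^ κ ∧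
      (A - B * (1 - t)) ^ (-γ) * (1 - (1 - t) ^ 2) ^ κ ≤
        max 1 (2 ^ κ) * (max (A - B) (A * t) ^ (-γ) * t ^ κ) := by
  obtain ⟨ht0, ht1⟩ := ht
  set M := max (A - B) (A * t)
  have hM : 0 < M := lt_max_of_lt_left (by linarith)
  have hle_base : M ≤ A - B * (1 - t) := max_le (by nlinarith) (by nlinarith)
  have hbase_le : A - B * (1 - t) ≤ 2 * M := by
    nlinarith [le_max_left (A - B) (A * t), le_max_right (A - B) (A * t)]
  have h2t : 2 - t ∈ Icc (1:ℝ) 2 := ⟨by linarith, by linarith⟩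
  have h2t_low := min_rpow_le_rpow one_pos h2t κ
  have h2t_up := rpow_le_max_rpow one_pos h2t κ
  rw [one_rpow] at h2t_low h2t_up
  have htκ : 0 ≤ t ^ κ := rpow_nonneg ht0.le _
  have hbase : 0 < A - B * (1 - t) := hM.trans_le hle_base
  rw [show 1 - (1 - t) ^ 2 = t * (2 - t) by ring, mul_rpow ht0.le (by linarith)]
  constructor
  · calc 2 ^ (-γ) * min 1 (2 ^ κ) * (M ^ (-γ) * t ^ κ)
        = (2 * M) ^ (-γ) * t ^ κ * min 1 (2 ^ κ) := by rw [mul_rpow zero_le_two hM.le]; ring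
      _ ≤ (A - B * (1 - t)) ^ (-γ) * t ^ κ * (2 - t) ^ κ :=
          mul_le_mul (mul_le_mul_of_nonneg_right
            (rpow_le_rpow_of_nonpos hbase hbase_le (by linarith)) htκ) h2t_low
            (le_min zero_le_one (by positivity)) (mul_nonneg (rpow_nonneg hbase.le _) htκ)
      _ = _ := by ring
  · calc (A - B * (1 - t)) ^ (-γ) * (t ^ κ * (2 - t) ^ κ)
        = (A - B * (1 - t)) ^ (-γ) * t ^ κ * (2 - t) ^ κ := by ring
      _ ≤ M ^ (-γ) * t ^ κ * max 1 (2 ^ κ) :=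
          mul_le_mul (mul_le_mul_of_nonneg_right
            (rpow_le_rpow_of_nonpos hM hle_base (by linarith)) htκ) h2t_up
            (rpow_nonneg (by linarith) _) (mul_nonneg (rpow_nonneg hM.le _) htκ)
      _ = _ := by ring

theorem sub_mul_sub_one_rpow_le {A B t : ℝ} (hγ : 0 ≤ γ) (hB : 0 ≤ B) (hBA : B < A)
    (ht : t ∈ Icc (0:ℝ) 1) :
    0 ≤ (A - B * (t - 1)) ^ (-γ) * (1 - (t - 1) ^ 2) ^ κ ∧
      (A - B * (t - 1)) ^ (-γ) * (1 - (t - 1) ^ 2) ^ κ ≤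
        (A - B * (1 - t)) ^ (-γ) * (1 - (1 - t) ^ 2) ^ κ := by
  obtain ⟨ht0, ht1⟩ := ht
  have hsq : 0 ≤ 1 - (t - 1) ^ 2 := by nlinarith
  rw [show (1 - t) ^ 2 = (t - 1) ^ 2 by ring]
  refine ⟨mul_nonneg (rpow_nonneg (by nlinarith) _) (rpow_nonneg hsq _),
    mul_le_mul_of_nonneg_right ?_ (rpow_nonneg hsq _)⟩
  exact rpow_le_rpow_of_nonpos (by nlinarith) (by nlinarith) (by linarith)

def admissiblePairs : Set (ℝ × ℝ) := {p | 0 ≤ p.2 ∧ p.2 < p.1}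

theorem isTheta_integral_modelIntegral (hκ : -1 < κ) (hγ : 0 ≤ γ) :
    (fun p : ℝ × ℝ => ∫ s in (-1:ℝ)..1, (p.1 - p.2 * s) ^ (-γ) * (1 - s ^ 2) ^ κ)
      =Θ[𝓟 admissiblePairs] fun p => p.1 ^ (-γ) * modelIntegral κ γ ((p.1 - p.2) / p.1) := by
  have hf : ∀ p ∈ admissiblePairs, IntervalIntegrable
      (fun s => (p.1 - p.2 * s) ^ (-γ) * (1 - s ^ 2) ^ κ) volume (-1) 1 := fun p hp =>
    intervalIntegrable_sub_mul_rpow_mul_one_sub_sq_rpow hκ hp.1 hp.2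
  have hlhs : ∀ p ∈ admissiblePairs, ∫ s in (-1:ℝ)..1, (p.1 - p.2 * s) ^ (-γ) * (1 - s ^ 2) ^ κ
      = ∫ t in Ioc 0 1, ((p.1 - p.2 * (1 - t)) ^ (-γ) * (1 - (1 - t) ^ 2) ^ κ
        + (p.1 - p.2 * (t - 1)) ^ (-γ) * (1 - (t - 1) ^ 2) ^ κ) := fun p hp => by
    rw [integral_neg_one_one_eq_integral_zero_one (hf p hp),
      intervalIntegral.integral_of_le zero_le_one]
  have hrhs : ∀ p ∈ admissiblePairs,
      ∫ t in Ioc 0 1, max (p.1 - p.2) (p.1 * t) ^ (-γ) * t ^ κ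
        = p.1 ^ (-γ) * modelIntegral κ γ ((p.1 - p.2) / p.1) := fun p hp => by
    have hA : 0 < p.1 := hp.1.trans_lt hp.2
    rw [rpow_mul_modelIntegral hA, mul_div_cancel₀ _ hA.ne',
      intervalIntegral.integral_of_le zero_le_one]
  refine (eventuallyEq_principal.2 hlhs).trans_isTheta <|
    (isTheta_integral_of_ae_bounds (c := 2 ^ (-γ) * min 1 (2 ^ κ)) (C := 2 * max 1 (2 ^ κ))
      (by positivity) (fun p hp => ?_) (fun p hp => ?_) fun p hp => ?_).trans_eventuallyEq
    (eventuallyEq_principal.2 hrhs)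
  · exact (intervalIntegrable_iff_integrableOn_Ioc_of_le zero_le_one).1
      ((hf p hp).comp_one_sub.add (hf p hp).comp_sub_one)
  · exact (intervalIntegrable_iff_integrableOn_Ioc_of_le zero_le_one).1
      (intervalIntegrable_max_rpow_mul_rpow hκ (by linarith [hp.2]) _ _ _)
  · refine ae_restrict_of_forall_mem measurableSet_Ioc fun t ht => ?_
    obtain ⟨hlow, hup⟩ := sub_mul_one_sub_rpow_bounds hγ hp.1 hp.2 ht
    obtain ⟨hrefl0, hrefl⟩ := sub_mul_sub_one_rpow_le (κ := κ) hγ hp.1 hp.2 (Ioc_subset_Icc_self ht)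
    have hM : 0 ≤ max (p.1 - p.2) (p.1 * t) ^ (-γ) * t ^ κ :=
      mul_nonneg (rpow_nonneg (le_max_of_le_left (by linarith [hp.2])) _) (rpow_nonneg ht.1.le _)
    exact ⟨hM, by linarith, by linarith⟩

end ModelIntegral

theorem ae_mem_Icc_piMeasure (ν : ℝ) : ∀ᵐ s ∂piMeasure ν, s ∈ Icc (-1 : ℝ) 1 := by
  unfold piMeasure
  split_ifs
  · refine Measure.ae_smul_measure (ae_add_measure_iff.2 ⟨?_, ?_⟩) _ <;>
    exact (ae_dirac_iff measurableSet_Icc).2 (by norm_num)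
  · exact (withDensity_absolutelyContinuous _ _).ae_le
      (ae_restrict_of_forall_mem measurableSet_Ioo fun s hs => Ioo_subset_Icc_self hs)

theorem integral_piMeasure_neg_half (φ : ℝ → ℝ) :
    ∫ s, φ s ∂piMeasure (-1/2) = (φ (-1) + φ 1) / 2 := by
  rw [piMeasure, if_pos rfl, integral_smul_measure,
    integral_add_measure (integrable_dirac enorm_lt_top) (integrable_dirac enorm_lt_top),
    integral_dirac, integral_dirac, smul_eq_mul, ENNReal.toReal_div]
  norm_num [div_eq_inv_mul]

theorem piMeasure_density_const_pos {ν : ℝ} (hν : -1/2 < ν) :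
    0 < Real.Gamma (ν+1) / (Real.sqrt π * Real.Gamma (ν+1/2)) :=
  div_pos (Real.Gamma_pos_of_pos (by linarith))
    (mul_pos (Real.sqrt_pos.2 Real.pi_pos) (Real.Gamma_pos_of_pos (by linarith)))

theorem integral_piMeasure_of_gt {ν : ℝ} (hν : -1/2 < ν) (φ : ℝ → ℝ) :
    ∫ s, φ s ∂piMeasure ν = Real.Gamma (ν+1) / (Real.sqrt π * Real.Gamma (ν+1/2)) *
      ∫ s in (-1:ℝ)..1, φ s * (1 - s ^ 2) ^ (ν - 1/2) := by
  have hc := (piMeasure_density_const_pos hν).le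
  rw [piMeasure, if_neg hν.ne', integral_withDensity_eq_integral_toReal_smul (by fun_prop)
      (ae_of_all _ fun _ => ENNReal.ofReal_lt_top),
    intervalIntegral.integral_of_le (by norm_num), integral_Ioc_eq_integral_Ioo,
    ← integral_const_mul]
  refine setIntegral_congr_fun measurableSet_Ioo fun s hs => ?_
  rw [ENNReal.toReal_ofReal (mul_nonneg hc (rpow_nonneg (by nlinarith [hs.1, hs.2]) _)),
    smul_eq_mul]
  ring

theorem integral_piMeasure_nonneg {ν γ A B : ℝ} (hB : 0 ≤ B) (hBA : B < A) :
    0 ≤ ∫ s, (A - B * s) ^ (-γ) ∂piMeasure ν :=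
  integral_nonneg_of_ae <| (ae_mem_Icc_piMeasure ν).mono fun s hs =>
    rpow_nonneg (by nlinarith [hs.1, hs.2]) _

theorem isTheta_integral_piMeasure_of_isTheta {ν γ : ℝ} {T : ℝ → ℝ} (hν : -1/2 < ν) (hγ : 0 ≤ γ)
    (hT : modelIntegral (ν - 1/2) γ =Θ[𝓟 (Ioc 0 1)] T) :
    (fun p : ℝ × ℝ => ∫ s, (p.1 - p.2 * s) ^ (-γ) ∂piMeasure ν)
      =Θ[𝓟 admissiblePairs] fun p => p.1 ^ (-γ) * T ((p.1 - p.2) / p.1) := by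
  have hmaps : Tendsto (fun p : ℝ × ℝ => (p.1 - p.2) / p.1) (𝓟 admissiblePairs) (𝓟 (Ioc 0 1)) :=
    tendsto_principal_principal.2 fun p hp =>
      ⟨div_pos (by linarith [hp.2]) (hp.1.trans_lt hp.2),
        (div_le_one (hp.1.trans_lt hp.2)).2 (by linarith [hp.1])⟩
  simp only [integral_piMeasure_of_gt hν]
  exact ((isTheta_integral_modelIntegral (by linarith) hγ).const_mul_left
    (piMeasure_density_const_pos hν).ne').trans
    ((isTheta_refl _ _).mul ⟨hT.1.comp_tendsto hmaps, hT.2.comp_tendsto hmaps⟩)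

theorem isTheta_integral_piMeasure_of_lt {ν γ : ℝ} (hν : -1/2 ≤ ν) (h : ν + 1/2 < γ) :
    (fun p : ℝ × ℝ => ∫ s, (p.1 - p.2 * s) ^ (-γ) ∂piMeasure ν)
      =Θ[𝓟 admissiblePairs] fun p => p.1 ^ (-ν - 1/2) * (p.1 - p.2) ^ (-γ + ν + 1/2) := by
  rcases hν.eq_or_lt with rfl | hν
  · simp only [integral_piMeasure_neg_half]
    refine isTheta_principal_of_bounds (c := 1/2) (C := 1) (by norm_num) fun p hp => ?_
    have hD : 0 < p.1 - p.2 := by linarith [hp.2]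
    have hle : (p.1 + p.2) ^ (-γ) ≤ (p.1 - p.2) ^ (-γ) :=
      rpow_le_rpow_of_nonpos hD (by linarith [hp.1]) (by linarith)
    have hnonneg : 0 ≤ (p.1 + p.2) ^ (-γ) := rpow_nonneg (by linarith [hp.1]) _
    rw [show -(-1/2 : ℝ) - 1/2 = 0 by norm_num, show -γ + -1/2 + 1/2 = -γ by ring, rpow_zero,
      one_mul, mul_neg_one, sub_neg_eq_add, mul_one]
    refine ⟨rpow_nonneg hD.le _, by linarith, by linarith⟩
  · refine (isTheta_integral_piMeasure_of_isTheta hν (by linarith)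
      (modelIntegral_isTheta_rpow (by linarith) (by linarith))).trans_eventuallyEq
      (eventuallyEq_principal.2 fun p hp => ?_)
    have hA : 0 < p.1 := hp.1.trans_lt hp.2
    have hD : 0 < p.1 - p.2 := by linarith [hp.2]
    rw [show ν - 1/2 + 1 - γ = -γ + ν + 1/2 by ring, div_rpow hD.le hA.le,
      show -ν - 1/2 = -γ - (-γ + ν + 1/2) by ring, rpow_sub hA]
    ring

theorem isTheta_integral_piMeasure_of_eq {ν γ : ℝ} (hγ : 0 < γ) (h : γ = ν + 1/2) :
    (fun p : ℝ × ℝ => ∫ s, (p.1 - p.2 * s) ^ (-γ) ∂piMeasure ν)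
      =Θ[𝓟 admissiblePairs] fun p => p.1 ^ (-ν - 1/2) * (1 + logPlus (p.2 / (p.1 - p.2))) := by
  have hT : modelIntegral (ν - 1/2) γ =Θ[𝓟 (Ioc 0 1)] fun r => 1 + logPlus ((1 - r) / r) := by
    rw [h, show ν + 1/2 = ν - 1/2 + 1 by ring]
    exact modelIntegral_isTheta_one_add_logPlus (by linarith)
  refine (isTheta_integral_piMeasure_of_isTheta (by linarith) hγ.le hT).trans_eventuallyEq
    (eventuallyEq_principal.2 fun p hp => ?_)
  have hA : p.1 ≠ 0 := (hp.1.trans_lt hp.2).ne'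
  have hD : p.1 - p.2 ≠ 0 := (sub_pos.2 hp.2).ne'
  rw [show -ν - 1/2 = -γ by linarith, show (1 - (p.1 - p.2) / p.1) / ((p.1 - p.2) / p.1)
    = p.2 / (p.1 - p.2) by field_simp; ring]

theorem isTheta_integral_piMeasure_of_gt {ν γ : ℝ} (hγ : 0 ≤ γ) (h : γ < ν + 1/2) :
    (fun p : ℝ × ℝ => ∫ s, (p.1 - p.2 * s) ^ (-γ) ∂piMeasure ν)
      =Θ[𝓟 admissiblePairs] fun p => p.1 ^ (-γ) := by
  simpa using isTheta_integral_piMeasure_of_isTheta (by linarith) hγ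
    (modelIntegral_isTheta_one (by linarith) (by linarith))

/-- two-sided estimates for `G(A,B) = ∫ (A−Bs)^{−γ} dΠ_ν(s)`, uniform in
`A > B ≥ 0`. -/
theorem piMeasure_integral_two_sided_estimates
    (ν γ : ℝ) (hν : -1/2 ≤ ν) (hγ : 0 < γ) :
    ∃ c C : ℝ, 0 < c ∧ c ≤ C ∧ ∀ A B : ℝ, 0 ≤ B → B < A →
      (ν + 1/2 < γ →
        c * (A ^ (-ν - 1/2) * (A - B) ^ (-γ + ν + 1/2)) ≤
          (∫ s, (A - B * s) ^ (-γ) ∂(piMeasure ν)) ∧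
        (∫ s, (A - B * s) ^ (-γ) ∂(piMeasure ν)) ≤
          C * (A ^ (-ν - 1/2) * (A - B) ^ (-γ + ν + 1/2))) ∧
      (γ = ν + 1/2 →
        c * (A ^ (-ν - 1/2) * (1 + logPlus (B / (A - B)))) ≤
          (∫ s, (A - B * s) ^ (-γ) ∂(piMeasure ν)) ∧
        (∫ s, (A - B * s) ^ (-γ) ∂(piMeasure ν)) ≤
          C * (A ^ (-ν - 1/2) * (1 + logPlus (B / (A - B))))) ∧
      (γ < ν + 1/2 →
        c * A ^ (-γ) ≤ (∫ s, (A - B * s) ^ (-γ) ∂(piMeasure ν)) ∧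
        (∫ s, (A - B * s) ^ (-γ) ∂(piMeasure ν)) ≤ C * A ^ (-γ)) := by
  have bounds : ∀ {T : ℝ × ℝ → ℝ},
      (fun p : ℝ × ℝ => ∫ s, (p.1 - p.2 * s) ^ (-γ) ∂piMeasure ν) =Θ[𝓟 admissiblePairs] T →
      (∀ p ∈ admissiblePairs, 0 ≤ T p) → ∃ c C : ℝ, 0 < c ∧ c ≤ C ∧ ∀ A B : ℝ, 0 ≤ B → B < A →
        c * T (A, B) ≤ ∫ s, (A - B * s) ^ (-γ) ∂piMeasure ν ∧
        ∫ s, (A - B * s) ^ (-γ) ∂piMeasure ν ≤ C * T (A, B) := fun hT hT0 => by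
    obtain ⟨c, C, hc, hcC, hb⟩ := exists_bounds_of_isTheta_principal hT
      (fun p hp => integral_piMeasure_nonneg hp.1 hp.2) hT0
    exact ⟨c, C, hc, hcC, fun A B hB hBA => hb (A, B) ⟨hB, hBA⟩⟩
  rcases lt_trichotomy (ν + 1/2) γ with h | h | h
  · obtain ⟨c, C, hc, hcC, hb⟩ := bounds (isTheta_integral_piMeasure_of_lt hν h) fun p hp =>
      mul_nonneg (rpow_nonneg (hp.1.trans hp.2.le) _) (rpow_nonneg (by linarith [hp.2]) _)
    exact ⟨c, C, hc, hcC, fun A B hB hBA =>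
      ⟨fun _ => hb A B hB hBA, fun h' => by linarith, fun h' => by linarith⟩⟩
  · obtain ⟨c, C, hc, hcC, hb⟩ := bounds (isTheta_integral_piMeasure_of_eq hγ h.symm) fun p hp =>
      mul_nonneg (rpow_nonneg (hp.1.trans hp.2.le) _) (add_nonneg zero_le_one (le_max_right _ _))
    exact ⟨c, C, hc, hcC, fun A B hB hBA =>
      ⟨fun h' => by linarith, fun _ => hb A B hB hBA, fun h' => by linarith⟩⟩
  · obtain ⟨c, C, hc, hcC, hb⟩ := bounds (isTheta_integral_piMeasure_of_gt hγ.le h) fun p hp =>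
      rpow_nonneg (hp.1.trans hp.2.le) _
    exact ⟨c, C, hc, hcC, fun A B hB hBA =>
      ⟨fun h' => by linarith, fun h' => by linarith, fun _ => hb A B hB hBA⟩⟩

end
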